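/- arXiv:1810.01134 — 2 statements merged into one kernel-verified Lean document; each statement's English description precedes it below -/
import Mathlib

section
/- Let a be real with 0 < a < 1 and set c = a(1−a). Then as k → +∞, Γ(k+1) / (Γ(ak + 1/2) Γ((1−a)k + 1/2)) · (k/(2π))^{−1/2} · a^{ak} (1−a)^{(1−a)k} = 1 + (1+2c)/(24ck) + O(k^{−2}). -/
/-!
Write `log Γ x = M x + E x` with `M x = (x - 1/2) log x - x + log (2π) / 2`. Since
`Γ (x + 1) = x Γ x`, the increment `E x - E (x + 1) = (x + 1/2) log (1 + 1/x) - 1` is a power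
series in `(2x + 1)⁻²` with positive coefficients, which places it between
`1/(12 (x + 1/2)(x + 3/2))` and `1/(12 x (x + 1))`. As `E (x + n) → 0` (Stirling's formula for
`n!` together with the Bohr–Mollerup limit `log Γ (x + n) - log Γ n - x log n → 0`), telescoping
gives `1/(12 (x + 1/2)) ≤ E x ≤ 1/(12 x)`. By `Γ (k + 1) = k Γ k`, the logarithm of the
left-hand side of the theorem is
`1 + E k - E (ak + 1/2) - E ((1-a)k + 1/2) - ak log (1 + 1/(2ak)) - (1-a)k log (1 + 1/(2(1-a)k))`,
and expanding each term to order `k⁻²` leaves `(1 + 2c)/(24ck) + O(k⁻²)`; exponentiating gives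
the claim.
-/

open Real Filter Topology Asymptotics

noncomputable def stirlingLogApprox (x : ℝ) : ℝ := (x - 1 / 2) * log x - x + log (2 * π) / 2

noncomputable def stirlingRemainder (x : ℝ) : ℝ := log (Gamma x) - stirlingLogApprox x

lemma tendsto_add_mul_log_one_add_div (a b : ℝ) :
    Tendsto (fun x : ℝ => (x + a) * log (1 + b / x)) atTop (𝓝 b) := by
  have h1 : Tendsto (fun x : ℝ => 1 + b / x) atTop (𝓝 1) := by
    simpa using tendsto_const_nhds.add ((tendsto_const_nhds (x := b)).div_atTop tendsto_id)
  have hlog : Tendsto (fun x : ℝ => log (1 + b / x)) atTop (𝓝 0) := by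
    simpa [Function.comp_def] using (continuousAt_log one_ne_zero).tendsto.comp h1
  simpa [add_mul] using (tendsto_mul_log_one_add_div_atTop b).add (hlog.const_mul a)

lemma stirlingRemainder_natCast_add_one (n : ℕ) :
    stirlingRemainder (n + 1) = log (Stirling.stirlingSeq (n + 1)) - log √π := by
  rw [Stirling.log_stirlingSeq_formula, log_sqrt pi_pos.le, stirlingRemainder, stirlingLogApprox,
    log_mul two_ne_zero pi_ne_zero, Gamma_nat_eq_factorial, Nat.factorial_succ, Nat.cast_mul,
    Nat.cast_succ, log_mul (by positivity) (by positivity), log_mul two_ne_zero (by positivity),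
    log_div (by positivity) (exp_pos 1).ne', log_exp]
  ring

lemma tendsto_stirlingRemainder_natCast_add_one :
    Tendsto (fun n : ℕ => stirlingRemainder (n + 1)) atTop (𝓝 0) := by
  have h := ((continuousAt_log (by positivity)).tendsto.comp
    Stirling.tendsto_stirlingSeq_sqrt_pi).comp (tendsto_add_atTop_nat 1)
  simpa only [Function.comp_def, stirlingRemainder_natCast_add_one, sub_self] using
    h.sub_const (log √π)

lemma tendsto_stirlingLogApprox_add_sub (x : ℝ) :
    Tendsto (fun y => stirlingLogApprox (y + x) - stirlingLogApprox y - x * log y) atTop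
      (𝓝 0) := by
  have h := (tendsto_add_mul_log_one_add_div (x - 1 / 2) x).sub_const x
  rw [sub_self] at h
  refine h.congr' ?_
  filter_upwards [eventually_gt_atTop 0, eventually_gt_atTop (-x)] with y hy hyx
  rw [show 1 + x / y = (y + x) / y by field_simp, log_div (by linarith) hy.ne']
  unfold stirlingLogApprox
  ring

lemma log_Gamma_add_natCast_add_one {x : ℝ} (hx : 0 < x) (n : ℕ) :
    log (Gamma (x + (n + 1))) =
      log (Gamma x) - BohrMollerup.logGammaSeq x n + x * log n + log (Gamma (n + 1)) := by
  have h := BohrMollerup.f_add_nat_eq (f := log ∘ Gamma) (fun {y} hy => by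
    rw [Function.comp_apply, Gamma_add_one hy.ne', log_mul hy.ne' (Gamma_pos_of_pos hy).ne',
      add_comm, Function.comp_apply]) hx (n + 1)
  simp only [Function.comp_apply, Nat.cast_succ] at h
  rw [h, BohrMollerup.logGammaSeq, Gamma_nat_eq_factorial]
  ring

lemma tendsto_stirlingRemainder_add_natCast {x : ℝ} (hx : 0 < x) :
    Tendsto (fun n : ℕ => stirlingRemainder (x + n)) atTop (𝓝 0) := by
  rw [← tendsto_add_atTop_iff_nat 1]
  have hn : Tendsto (fun n : ℕ => (n : ℝ) + 1) atTop atTop :=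
    tendsto_atTop_add_const_right _ 1 tendsto_natCast_atTop_atTop
  -- `E (x + n + 1) = (log Γ x - logGammaSeq x n) - x (log (n + 1) - log n) + E (n + 1)`
  --   `- (M (n + 1 + x) - M (n + 1) - x log (n + 1))`, and each bracket tends to `0`.
  have h := ((((BohrMollerup.tendsto_log_gamma hx).const_sub (log (Gamma x))).sub
    (tendsto_log_nat_add_one_sub_log.const_mul x)).add
    tendsto_stirlingRemainder_natCast_add_one).sub
    ((tendsto_stirlingLogApprox_add_sub x).comp hn)
  simp only [sub_self, mul_zero, add_zero] at h
  refine h.congr fun n => ?_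
  simp only [Function.comp_apply, stirlingRemainder, Nat.cast_succ]
  rw [log_Gamma_add_natCast_add_one hx, add_comm _ x]
  ring

lemma stirlingRemainder_sub_stirlingRemainder_add_one {x : ℝ} (hx : 0 < x) :
    stirlingRemainder x - stirlingRemainder (x + 1) = (x + 1 / 2) * log (1 + x⁻¹) - 1 := by
  rw [stirlingRemainder, stirlingRemainder, stirlingLogApprox, stirlingLogApprox,
    Gamma_add_one hx.ne', log_mul hx.ne' (Gamma_pos_of_pos hx).ne',
    show 1 + x⁻¹ = (x + 1) / x by field_simp, log_div (by positivity) hx.ne']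
  ring

lemma hasSum_add_half_mul_log_one_add_inv_sub_one {a : ℝ} (ha : 0 < a) :
    HasSum (fun k : ℕ => ((1 / (2 * a + 1)) ^ 2) ^ (k + 1) / (2 * (k + 1) + 1))
      ((a + 1 / 2) * log (1 + a⁻¹) - 1) := by
  have h : HasSum (fun k : ℕ => ((1 / (2 * a + 1)) ^ 2) ^ k / (2 * k + 1))
      ((a + 1 / 2) * log (1 + a⁻¹)) := by
    convert! (hasSum_log_one_add_inv ha).mul_left (a + 1 / 2) using 1
    funext k
    rw [← pow_mul, pow_succ]
    field_simp
  simpa [Finset.sum_range_one] using (hasSum_nat_add_iff' 1).2 h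

lemma one_div_three_mul_sq_le_add_half_mul_log_one_add_inv_sub_one {a : ℝ} (ha : 0 < a) :
    1 / (3 * (2 * a + 1) ^ 2) ≤ (a + 1 / 2) * log (1 + a⁻¹) - 1 := by
  calc 1 / (3 * (2 * a + 1) ^ 2) = ((1 / (2 * a + 1)) ^ 2) ^ (0 + 1) / (2 * ((0 : ℕ) + 1) + 1) := by
        norm_num; ring
    _ ≤ _ := le_hasSum (hasSum_add_half_mul_log_one_add_inv_sub_one ha) 0 fun k _ => by positivity

lemma add_half_mul_log_one_add_inv_sub_one_le {a : ℝ} (ha : 0 < a) :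
    (a + 1 / 2) * log (1 + a⁻¹) - 1 ≤ 1 / (12 * a * (a + 1)) := by
  set r := (1 / (2 * a + 1)) ^ 2 with hr
  have hr1 : r < 1 := by
    rw [hr, div_pow, one_pow, div_lt_one (by positivity)]
    nlinarith
  have hgeom : HasSum (fun k : ℕ => r ^ (k + 1) / 3) (r / (1 - r) / 3) := by
    simpa [pow_succ, mul_comm, div_eq_mul_inv] using
      ((hasSum_geometric_of_lt_one (by positivity) hr1).mul_left r).div_const 3
  have hsum : r / (1 - r) / 3 = 1 / (12 * a * (a + 1)) := by
    rw [hr, div_pow, one_pow, one_sub_div (by positivity),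
      show (2 * a + 1) ^ 2 - 1 = 4 * a * (a + 1) by ring]
    field_simp
    ring
  rw [← hsum]
  refine hasSum_le (fun k => ?_) (hasSum_add_half_mul_log_one_add_inv_sub_one ha) hgeom
  gcongr
  norm_cast
  omega

lemma le_of_tendsto_of_sub_succ_le {α : Type*} [AddCommGroup α] [PartialOrder α]
    [IsOrderedAddMonoid α] [TopologicalSpace α] [OrderClosedTopology α] [ContinuousSub α]
    {u v : ℕ → α} {l : α} (hu : Tendsto u atTop (𝓝 l)) (hv : Tendsto v atTop (𝓝 l))
    (h : ∀ n, u n - u (n + 1) ≤ v n - v (n + 1)) : u 0 ≤ v 0 := by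
  have hanti : Antitone fun n => v n - u n := antitone_nat_of_succ_le fun n =>
    sub_le_sub_iff.2 (by simpa [add_comm] using sub_le_sub_iff.1 (h n))
  have hlim : Tendsto (fun n => v n - u n) atTop (𝓝 0) := by simpa using hv.sub hu
  simpa using hanti.le_of_tendsto hlim 0

lemma tendsto_one_div_mul_add_natCast (c x : ℝ) (hc : 0 < c) :
    Tendsto (fun n : ℕ => 1 / (c * (x + n))) atTop (𝓝 0) :=
  tendsto_const_nhds.div_atTop
    ((tendsto_atTop_add_const_left _ x tendsto_natCast_atTop_atTop).const_mul_atTop hc)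

lemma stirlingRemainder_le {x : ℝ} (hx : 0 < x) : stirlingRemainder x ≤ 1 / (12 * x) := by
  have hxn (n : ℕ) : 0 < x + n := by positivity
  simpa using le_of_tendsto_of_sub_succ_le (tendsto_stirlingRemainder_add_natCast hx)
    (tendsto_one_div_mul_add_natCast 12 x (by norm_num)) fun n => by
      rw [Nat.cast_succ, ← add_assoc, stirlingRemainder_sub_stirlingRemainder_add_one (hxn n)]
      calc _ ≤ 1 / (12 * (x + n) * (x + n + 1)) := add_half_mul_log_one_add_inv_sub_one_le (hxn n)
        _ = _ := by field_simp; ring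

lemma one_div_twelve_mul_add_half_le_stirlingRemainder {x : ℝ} (hx : 0 < x) :
    1 / (12 * (x + 1 / 2)) ≤ stirlingRemainder x := by
  have hxn (n : ℕ) : 0 < x + n := by positivity
  have h := le_of_tendsto_of_sub_succ_le (v := fun n : ℕ => stirlingRemainder (x + n))
    (by simpa [add_right_comm] using tendsto_one_div_mul_add_natCast 12 (x + 1 / 2) (by norm_num))
    (tendsto_stirlingRemainder_add_natCast hx) fun n => by
      rw [Nat.cast_succ, ← add_assoc, stirlingRemainder_sub_stirlingRemainder_add_one (hxn n)]
      calc _ = 1 / (12 * (x + n + 1 / 2) * (x + n + 3 / 2)) := by field_simp; ring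
        _ ≤ 1 / (3 * (2 * (x + n) + 1) ^ 2) :=
          one_div_le_one_div_of_le (by positivity) (by nlinarith [hxn n])
        _ ≤ _ := one_div_three_mul_sq_le_add_half_mul_log_one_add_inv_sub_one (hxn n)
  simpa using h

lemma abs_stirlingRemainder_add_sub_le {x c : ℝ} (hx : 0 < x) (hc : 0 ≤ c) :
    |stirlingRemainder (x + c) - 1 / (12 * x)| ≤ (2 * c + 1) / 24 * (1 / x ^ 2) := by
  have hxc : 0 < x + c := by linarith
  have hupper : stirlingRemainder (x + c) ≤ 1 / (12 * x) :=
    (stirlingRemainder_le hxc).trans (by gcongr; linarith)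
  have hlower : 1 / (12 * x) - (2 * c + 1) / 24 * (1 / x ^ 2) ≤ 1 / (12 * (x + c + 1 / 2)) := by
    rw [div_mul_div_comm, mul_one, div_sub_div _ _ (by positivity) (by positivity),
      div_le_div_iff₀ (by positivity) (by positivity)]
    nlinarith [sq_nonneg (2 * c + 1), mul_pos hx hx]
  rw [abs_le]
  constructor <;> nlinarith [one_div_twelve_mul_add_half_le_stirlingRemainder hxc,
    show 0 ≤ (2 * c + 1) / 24 * (1 / x ^ 2) by positivity]

lemma isBigO_stirlingRemainder_add_sub {c : ℝ} (hc : 0 ≤ c) :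
    (fun x => stirlingRemainder (x + c) - 1 / (12 * x)) =O[atTop] fun x => 1 / x ^ 2 :=
  .of_bound _ <| (eventually_gt_atTop 0).mono fun x hx => by
    simpa [Real.norm_eq_abs, abs_of_nonneg (by positivity : (0 : ℝ) ≤ 1 / x ^ 2)] using
      abs_stirlingRemainder_add_sub_le hx hc

lemma isBigO_mul_log_one_add_one_div_two_mul_sub :
    (fun y => y * log (1 + 1 / (2 * y)) - (1 / 2 - 1 / (8 * y))) =O[atTop] fun y => 1 / y ^ 2 := by
  refine .of_bound (1 / 4) <| (eventually_ge_atTop 1).mono fun y hy => ?_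
  have hy0 : 0 < y := by linarith
  set u := 1 / (2 * y) with hu
  have hu0 : 0 < u := by positivity
  have hu1 : u ≤ 1 / 2 := by rw [hu]; gcongr; linarith
  have hlog : |log (1 + u) - (u - u ^ 2 / 2)| ≤ u ^ 3 / (1 - u) := by
    have := abs_log_sub_add_sum_range_le (x := -u) (by rw [abs_neg, abs_of_pos hu0]; linarith) 2
    norm_num [Finset.sum_range_succ, abs_of_pos hu0] at this
    rwa [show log (1 + u) - (u - u ^ 2 / 2) = -u + u ^ 2 / 2 + log (1 + u) by ring]
  have hmain : y * (u - u ^ 2 / 2) = 1 / 2 - 1 / (8 * y) := by rw [hu]; field_simp; ring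
  rw [Real.norm_eq_abs, Real.norm_eq_abs, abs_of_pos (by positivity : (0 : ℝ) < 1 / y ^ 2), ← hmain,
    ← mul_sub, abs_mul, abs_of_pos hy0]
  calc y * |log (1 + u) - (u - u ^ 2 / 2)| ≤ y * (2 * u ^ 3) := by
        gcongr
        refine hlog.trans ?_
        rw [div_le_iff₀ (by linarith)]
        nlinarith [pow_pos hu0 3]
    _ = 1 / 4 * (1 / y ^ 2) := by rw [hu]; field_simp; ring

lemma Asymptotics.IsBigO.comp_const_mul_one_div_sq {f : ℝ → ℝ} {a : ℝ} (ha : 0 < a)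
    (hf : f =O[atTop] fun x => 1 / x ^ 2) : (fun k => f (a * k)) =O[atTop] fun k => 1 / k ^ 2 := by
  refine (hf.comp_tendsto (tendsto_id.const_mul_atTop ha)).trans ?_
  simpa [Function.comp_def, mul_pow, ← div_div, div_eq_mul_inv, mul_comm] using
    isBigO_const_mul_self (a ^ 2)⁻¹ (fun k : ℝ => (k ^ 2)⁻¹) atTop

lemma isBigO_exp_sub_one_sub {α : Type*} {l : Filter α} {f : α → ℝ} (hf : Tendsto f l (𝓝 0)) :
    (fun x => exp (f x) - 1 - f x) =O[l] fun x => f x ^ 2 :=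
  .of_bound 1 <| (hf.norm.eventually (eventually_le_nhds (by norm_num : ‖(0 : ℝ)‖ < 1))).mono
    fun x hx => by simpa using abs_exp_sub_one_sub_id_le (by simpa using hx)

lemma exists_forall_ge_abs_le_div_sq {f : ℝ → ℝ} (hf : f =O[atTop] fun k => 1 / k ^ 2) :
    ∃ C K : ℝ, ∀ k ≥ K, |f k| ≤ C / k ^ 2 := by
  obtain ⟨C, hC⟩ := hf.bound
  obtain ⟨K, hK⟩ := eventually_atTop.1 hC
  refine ⟨C, K, fun k hk => ?_⟩
  simpa [div_eq_mul_inv] using hK k hk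

noncomputable def logXi (a k : ℝ) : ℝ :=
  1 + stirlingRemainder k - stirlingRemainder (a * k + 1 / 2)
    - stirlingRemainder ((1 - a) * k + 1 / 2) - a * k * log (1 + 1 / (2 * (a * k)))
    - (1 - a) * k * log (1 + 1 / (2 * ((1 - a) * k)))

lemma log_add_one_half {y : ℝ} (hy : 0 < y) :
    log (y + 1 / 2) = log y + log (1 + 1 / (2 * y)) := by
  rw [← log_mul hy.ne' (by positivity)]
  congr 1
  field_simp

lemma Xi_eq_exp_logXi {a k : ℝ} (ha0 : 0 < a) (ha1 : a < 1) (hk : 0 < k) :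
    Gamma (k + 1) / (Gamma (a * k + 1 / 2) * Gamma ((1 - a) * k + 1 / 2)) *
        (k / (2 * π)) ^ (-(1 : ℝ) / 2) * a ^ (a * k) * (1 - a) ^ ((1 - a) * k) =
      exp (logXi a k) := by
  have hb0 : 0 < 1 - a := by linarith
  have hak : 0 < a * k := by positivity
  have hbk : 0 < (1 - a) * k := by positivity
  have hΓ {y : ℝ} (hy : 0 < y) : Gamma y ≠ 0 := (Gamma_pos_of_pos hy).ne'
  refine (exp_log ?_).symm.trans (congrArg exp ?_)
  · positivity
  rw [log_mul (by positivity) (by positivity), log_mul (by positivity) (by positivity),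
    log_mul (by positivity) (by positivity), log_div (hΓ (by positivity)) (by positivity),
    log_mul (hΓ (by positivity)) (hΓ (by positivity)), log_rpow (by positivity),
    log_rpow ha0, log_rpow hb0, Gamma_add_one hk.ne', log_mul hk.ne' (hΓ hk),
    log_div hk.ne' (by positivity), logXi, stirlingRemainder, stirlingRemainder,
    stirlingRemainder, stirlingLogApprox, stirlingLogApprox, stirlingLogApprox,
    log_add_one_half hak, log_add_one_half hbk, log_mul ha0.ne' hk.ne', log_mul hb0.ne' hk.ne']
  ring

lemma isBigO_logXi_sub {a : ℝ} (ha0 : 0 < a) (ha1 : a < 1) :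
    (fun k => logXi a k - (1 + 2 * (a * (1 - a))) / (24 * (a * (1 - a)) * k)) =O[atTop]
      fun k => 1 / k ^ 2 := by
  have hb0 : 0 < 1 - a := by linarith
  have hE := isBigO_stirlingRemainder_add_sub le_rfl
  have hEhalf := isBigO_stirlingRemainder_add_sub (c := 1 / 2) (by norm_num)
  have hφ := isBigO_mul_log_one_add_one_div_two_mul_sub
  refine ((((hE.sub (hEhalf.comp_const_mul_one_div_sq ha0)).sub
    (hEhalf.comp_const_mul_one_div_sq hb0)).sub (hφ.comp_const_mul_one_div_sq ha0)).sub
    (hφ.comp_const_mul_one_div_sq hb0)).congr' ?_ EventuallyEq.rfl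
  filter_upwards [eventually_gt_atTop 0] with k hk
  simp only [add_zero, logXi]
  field_simp
  ring

lemma isBigO_logXi {a : ℝ} (ha0 : 0 < a) (ha1 : a < 1) :
    logXi a =O[atTop] fun k => 1 / k := by
  have hinv : (fun k : ℝ => 1 / k ^ 2) =O[atTop] fun k => 1 / k :=
    .of_bound' <| (eventually_ge_atTop 1).mono fun k hk => by
      rw [Real.norm_eq_abs, Real.norm_eq_abs, abs_of_pos (by positivity),
        abs_of_pos (by positivity)]
      exact one_div_le_one_div_of_le (by positivity) (by nlinarith)
  have hmain : (fun k => (1 + 2 * (a * (1 - a))) / (24 * (a * (1 - a)) * k)) =O[atTop]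
      fun k => 1 / k :=
    (isBigO_const_mul_self ((1 + 2 * (a * (1 - a))) / (24 * (a * (1 - a)))) _ _).congr_left
      fun k => by rw [div_mul_div_comm, mul_one]
  exact (((isBigO_logXi_sub ha0 ha1).trans hinv).add hmain).congr_left fun k => sub_add_cancel _ _

theorem Xi_asymptotics (a : ℝ) (ha0 : 0 < a) (ha1 : a < 1) :
    let c := a * (1 - a)
    ∃ C K : ℝ, ∀ k : ℝ, k ≥ K →
      |Real.Gamma (k + 1) / (Real.Gamma (a * k + 1 / 2) * Real.Gamma ((1 - a) * k + 1 / 2)) *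
          (k / (2 * Real.pi)) ^ (-(1 : ℝ) / 2) *
          a ^ (a * k) * (1 - a) ^ ((1 - a) * k) -
        (1 + (1 + 2 * c) / (24 * c * k))| ≤ C / k ^ 2 := by
  dsimp only
  have hR := isBigO_logXi ha0 ha1
  have hexp := (isBigO_exp_sub_one_sub
    (hR.trans_tendsto (tendsto_const_nhds.div_atTop tendsto_id))).trans (hR.pow 2)
  simp only [one_div_pow] at hexp
  refine exists_forall_ge_abs_le_div_sq ((hexp.add (isBigO_logXi_sub ha0 ha1)).congr' ?_ .rfl)
  filter_upwards [eventually_gt_atTop 0] with k hk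
  rw [Xi_eq_exp_logXi ha0 ha1 hk]
  ring
end

section
/- Let f(τ) = τ^{−1/2}(1−τ)^{−1/2}/(1 − zτ) and ψ(τ) = a log τ + (1−a) log(1−τ) with 0 < a < 1, c = a(1−a), and zτ ≠ 1 near τ = a. Then the coefficient c₂(a,z) = −(1/ψ''(a))·(F₂ − Ψ₃F₁ + (5/12)Ψ₃² − (1/4)Ψ₄), where Ψ_k = ψ^(k)(a)/ψ''(a) and F_k = f^(k)(a)/f(a), evaluates to c₂(a,z) = 2cz²/(1−az)² + (1−2a)z/(1−az) − (1+2c)/(12c). -/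
/-!
Both ψ and log f are sums of logarithms of affine functions, so everything is explicit.
The derivatives of ψ come from `log^(k+1) x = (-1)^k k! x^(-k-1)`, giving ψ''(a) = -1/c.
For f one uses its logarithmic derivative L = f'/f = -1/(2τ) + 1/(2(1-τ)) + z/(1-zτ):
F₁ = L(a) and F₂ = L(a)² + L'(a). Substituting, the claim becomes an identity of rational
functions in a and z.
-/

open Real Filter Topology
open scoped Nat

theorem Real.iteratedDeriv_succ_log (k : ℕ) (x : ℝ) :
    iteratedDeriv (k + 1) log x = (-1) ^ k * k ! * x ^ (-1 - k : ℤ) := by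
  rw [iteratedDeriv_succ', deriv_log', iteratedDeriv_eq_iterate, iter_deriv_inv]

theorem Real.iteratedDeriv_succ_log_one_sub (k : ℕ) (x : ℝ) :
    iteratedDeriv (k + 1) (fun τ => log (1 - τ)) x = -(k ! * (1 - x) ^ (-1 - k : ℤ)) := by
  simp only [iteratedDeriv_comp_const_sub, smul_eq_mul, Real.iteratedDeriv_succ_log]
  rw [← mul_assoc, ← mul_assoc, ← pow_add, show k + 1 + k = 2 * k + 1 by ring, pow_succ,
    pow_mul]
  norm_num

theorem iteratedDeriv_succ_mul_log_add_mul_log_one_sub (p q : ℝ) {x : ℝ} (hx₀ : x ≠ 0)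
    (hx₁ : x ≠ 1) (k : ℕ) :
    iteratedDeriv (k + 1) (fun τ => p * log τ + q * log (1 - τ)) x =
      k ! * ((-1) ^ k * p / x ^ (k + 1) - q / (1 - x) ^ (k + 1)) := by
  have hlog : ContDiffAt ℝ (k + 1) (fun τ => p * log τ) x :=
    contDiffAt_const.mul (contDiffAt_log.2 hx₀)
  have hlog₁ : ContDiffAt ℝ (k + 1) (fun τ => q * log (1 - τ)) x :=
    contDiffAt_const.mul ((contDiffAt_const.sub contDiffAt_id).log (sub_ne_zero.2 hx₁.symm))
  rw [iteratedDeriv_fun_add hlog hlog₁, iteratedDeriv_const_mul_field,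
    iteratedDeriv_const_mul_field, Real.iteratedDeriv_succ_log, Real.iteratedDeriv_succ_log_one_sub]
  simp only [show (-1 - k : ℤ) = -((k + 1 : ℕ) : ℤ) by push_cast; ring, zpow_neg,
    zpow_natCast]
  ring

theorem iteratedDeriv_two_eq_of_hasDerivAt_self_mul {𝕜 : Type*} [NontriviallyNormedField 𝕜]
    {f L : 𝕜 → 𝕜} {x L' : 𝕜} (hf : ∀ᶠ y in 𝓝 x, HasDerivAt f (f y * L y) y)
    (hL : HasDerivAt L L' x) : iteratedDeriv 2 f x = f x * (L x ^ 2 + L') := by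
  have hderiv : deriv f =ᶠ[𝓝 x] fun y => f y * L y := hf.mono fun y hy => hy.deriv
  rw [iteratedDeriv_succ, iteratedDeriv_one, hderiv.deriv_eq,
    (hf.self_of_nhds.fun_mul hL).deriv]
  ring

theorem hasDerivAt_rpow_mul_one_sub_rpow_div (α β z : ℝ) {τ : ℝ} (hτ₀ : τ ≠ 0)
    (hτ₁ : τ ≠ 1) (hz : 1 - z * τ ≠ 0) :
    HasDerivAt (fun τ => τ ^ α * (1 - τ) ^ β / (1 - z * τ))
      (τ ^ α * (1 - τ) ^ β / (1 - z * τ) * (α / τ - β / (1 - τ) + z / (1 - z * τ)))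
      τ := by
  have h1τ : 1 - τ ≠ 0 := sub_ne_zero.2 hτ₁.symm
  have := ((hasDerivAt_rpow_const (p := α) (Or.inl hτ₀)).mul
    (((hasDerivAt_id' τ).const_sub 1).rpow_const (p := β) (Or.inl h1τ))).div
    (((hasDerivAt_id' τ).const_mul z).const_sub 1) hz
  refine this.congr_deriv ?_
  simp only [Pi.mul_apply, rpow_sub_one hτ₀, rpow_sub_one h1τ]
  have hz' : 1 - τ * z ≠ 0 := by rwa [mul_comm]
  field_simp
  ring

theorem hasDerivAt_div_sub_div_one_sub_add_div (α β z : ℝ) {τ : ℝ} (hτ₀ : τ ≠ 0)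
    (hτ₁ : τ ≠ 1) (hz : 1 - z * τ ≠ 0) :
    HasDerivAt (fun τ => α / τ - β / (1 - τ) + z / (1 - z * τ))
      (-(α / τ ^ 2) - β / (1 - τ) ^ 2 + z ^ 2 / (1 - z * τ) ^ 2) τ := by
  have h1τ : 1 - τ ≠ 0 := sub_ne_zero.2 hτ₁.symm
  have := (((hasDerivAt_const τ α).div (hasDerivAt_id' τ) hτ₀).sub
    ((hasDerivAt_const τ β).div ((hasDerivAt_id' τ).const_sub 1) h1τ)).add
    ((hasDerivAt_const τ z).div (((hasDerivAt_id' τ).const_mul z).const_sub 1) hz)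
  refine this.congr_deriv ?_
  field_simp
  ring

theorem iteratedDeriv_one_rpow_mul_one_sub_rpow_div (α β z : ℝ) {x : ℝ} (hx₀ : x ≠ 0)
    (hx₁ : x ≠ 1) (hz : 1 - z * x ≠ 0) :
    iteratedDeriv 1 (fun τ => τ ^ α * (1 - τ) ^ β / (1 - z * τ)) x =
      x ^ α * (1 - x) ^ β / (1 - z * x) * (α / x - β / (1 - x) + z / (1 - z * x)) := by
  rw [iteratedDeriv_one]
  exact (hasDerivAt_rpow_mul_one_sub_rpow_div α β z hx₀ hx₁ hz).deriv

theorem iteratedDeriv_two_rpow_mul_one_sub_rpow_div (α β z : ℝ) {x : ℝ} (hx₀ : x ≠ 0)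
    (hx₁ : x ≠ 1) (hz : 1 - z * x ≠ 0) :
    iteratedDeriv 2 (fun τ => τ ^ α * (1 - τ) ^ β / (1 - z * τ)) x =
      x ^ α * (1 - x) ^ β / (1 - z * x) * ((α / x - β / (1 - x) + z / (1 - z * x)) ^ 2 +
        (-(α / x ^ 2) - β / (1 - x) ^ 2 + z ^ 2 / (1 - z * x) ^ 2)) := by
  have hnear : ∀ᶠ τ in 𝓝 x, τ ≠ 0 ∧ τ ≠ 1 ∧ 1 - z * τ ≠ 0 :=
    (continuousAt_id.eventually_ne hx₀).and <| (continuousAt_id.eventually_ne hx₁).and <|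
      (continuousAt_const.sub (continuousAt_const.mul continuousAt_id)).eventually_ne hz
  exact iteratedDeriv_two_eq_of_hasDerivAt_self_mul
    (hnear.mono fun τ ⟨hτ₀, hτ₁, hzτ⟩ =>
      hasDerivAt_rpow_mul_one_sub_rpow_div α β z hτ₀ hτ₁ hzτ)
    (hasDerivAt_div_sub_div_one_sub_add_div α β z hx₀ hx₁ hz)

theorem c2_coefficient (a z : ℝ) (ha0 : 0 < a) (ha1 : a < 1) (haz : a * z ≠ 1) :
    let c := a * (1 - a)
    let ψ : ℝ → ℝ := fun τ => a * Real.log τ + (1 - a) * Real.log (1 - τ)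
    let f : ℝ → ℝ := fun τ => τ ^ (-(1 : ℝ) / 2) * (1 - τ) ^ (-(1 : ℝ) / 2) / (1 - z * τ)
    let Ψ : ℕ → ℝ := fun n => iteratedDeriv n ψ a / iteratedDeriv 2 ψ a
    let F : ℕ → ℝ := fun n => iteratedDeriv n f a / f a
    (-(1 / iteratedDeriv 2 ψ a) *
        (F 2 - Ψ 3 * F 1 + (5 / 12) * (Ψ 3) ^ 2 - (1 / 4) * Ψ 4) =
      2 * c * z ^ 2 / (1 - a * z) ^ 2 + (1 - 2 * a) * z / (1 - a * z) -
        (1 + 2 * c) / (12 * c)) := by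
  intro c ψ f Ψ F
  have ha₀ : a ≠ 0 := ha0.ne'
  have ha₁ : 1 - a ≠ 0 := sub_ne_zero.2 ha1.ne'
  have haz' : 1 - a * z ≠ 0 := sub_ne_zero.2 haz.symm
  have hza : 1 - z * a ≠ 0 := by rwa [mul_comm]
  have hψ := iteratedDeriv_succ_mul_log_add_mul_log_one_sub a (1 - a) ha₀ ha1.ne
  have ψ₂ : iteratedDeriv 2 ψ a = -(1 / a + 1 / (1 - a)) := by
    rw [hψ 1]; norm_num; field_simp; ring
  have ψ₃ : iteratedDeriv 3 ψ a = 2 / a ^ 2 - 2 / (1 - a) ^ 2 := by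
    rw [hψ 2]; norm_num; field_simp
  have ψ₄ : iteratedDeriv 4 ψ a = -(6 / a ^ 3 + 6 / (1 - a) ^ 3) := by
    rw [hψ 3]; norm_num; field_simp; ring
  have f₁ : iteratedDeriv 1 f a = f a * _ :=
    iteratedDeriv_one_rpow_mul_one_sub_rpow_div _ _ z ha₀ ha1.ne hza
  have f₂ : iteratedDeriv 2 f a = f a * _ :=
    iteratedDeriv_two_rpow_mul_one_sub_rpow_div _ _ z ha₀ ha1.ne hza
  have hfa : f a ≠ 0 :=
    div_ne_zero (mul_pos (rpow_pos_of_pos ha0 _) (rpow_pos_of_pos (by linarith) _)).ne' hza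
  simp only [F, Ψ, c, f₁, f₂, ψ₂, ψ₃, ψ₄, mul_div_cancel_left₀ _ hfa]
  field_simp
  ring
end
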